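/- arXiv:2507.14773 — 3 statements merged into one kernel-verified Lean document; each statement's English description precedes it below -/
import Mathlib

section
/- Let a be a function assigning to each prime p an integer a_p with |a_p| ≤ 2√p. Assume that for every natural number N there exist a prime ℓ > N and a constant c > 0 such that for all sufficiently large real X the number of primes p ≤ X with a_p ≠ 0 and ℓ ∣ a_p is at least c·X/log X. Then for every nonzero polynomial P with integer coefficients, the set of primes p such that p does not divide P(a_p) is infinite. -/
open Filter

private lemma eval_abs_bound (P : Polynomial ℤ) (v : ℤ) (M : ℝ) (hM : 1 ≤ M)
    (hv : |(v : ℝ)| ≤ M) :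
    |((P.eval v : ℤ) : ℝ)| ≤
      (∑ i ∈ Finset.range (P.natDegree + 1), |((P.coeff i : ℤ) : ℝ)|) * M ^ P.natDegree := by
  rw [Polynomial.eval_eq_sum_range]
  push_cast
  rw [Finset.sum_mul]
  refine (Finset.abs_sum_le_sum_abs _ _).trans (Finset.sum_le_sum fun i hi => ?_)
  rw [abs_mul, abs_pow]
  have h1 : |(v : ℝ)| ^ i ≤ M ^ P.natDegree := by
    calc |(v:ℝ)| ^ i ≤ M ^ i := pow_le_pow_left₀ (abs_nonneg _) hv i
    _ ≤ M ^ P.natDegree := pow_le_pow_right₀ hM (Nat.lt_succ_iff.mp (Finset.mem_range.mp hi))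
  exact mul_le_mul_of_nonneg_left h1 (abs_nonneg _)

private lemma primes_card_bound (F : Finset Nat.Primes) (n : ℤ) (hn : n ≠ 0) (T : ℝ)
    (hT : 0 ≤ T) (hF : ∀ p ∈ F, T ≤ ((p : ℕ) : ℝ) ∧ ((p : ℕ) : ℤ) ∣ n) :
    T ^ F.card ≤ |(n : ℝ)| := by
  set G : Finset ℕ := F.image (fun p : Nat.Primes => (p : ℕ)) with hG
  have hcard : G.card = F.card := Finset.card_image_of_injective _ Nat.Primes.coe_nat_injective
  have hprod : (∏ p ∈ G, p) ∣ n.natAbs := by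
    apply Finset.prod_primes_dvd
    · intro p hp
      obtain ⟨q, hq, rfl⟩ := Finset.mem_image.mp hp
      exact q.2.prime
    · intro p hp
      obtain ⟨q, hq, rfl⟩ := Finset.mem_image.mp hp
      exact Int.natCast_dvd.mp ((hF q hq).2)
  have hpos : 0 < n.natAbs := Int.natAbs_pos.mpr hn
  have hle : (∏ p ∈ G, p) ≤ n.natAbs := Nat.le_of_dvd hpos hprod
  calc T ^ F.card = ∏ _p ∈ G, T := by rw [Finset.prod_const, hcard]
    _ ≤ ∏ p ∈ G, (p : ℝ) := by
        refine Finset.prod_le_prod (fun _ _ => hT) fun p hp => ?_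
        obtain ⟨q, hq, rfl⟩ := Finset.mem_image.mp hp
        exact (hF q hq).1
    _ = ((∏ p ∈ G, p : ℕ) : ℝ) := by push_cast; ring
    _ ≤ (n.natAbs : ℝ) := by exact_mod_cast hle
    _ = |(n : ℝ)| := by rw [Nat.cast_natAbs]; push_cast; ring

set_option maxHeartbeats 1600000 in
/-- If `a` assigns to each prime `p` an integer with `|a p| ≤ 2√p`,
and for every `N` there is a prime `ℓ > N` and a `c > 0` such that for all sufficiently
large `X` the number of primes `p ≤ X` with `a p ≠ 0` and `ℓ ∣ a p` is at least
`c·X/log X`, then for every nonzero integer polynomial `P` the set of primes `p`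
with `p ∤ P(a p)` is infinite. -/
theorem frobenius_traces_poor_mans_transcendence_core
    (a : Nat.Primes → ℤ)
    (hHasse : ∀ p : Nat.Primes, |(a p : ℝ)| ≤ 2 * Real.sqrt (p : ℕ))
    (hdens : ∀ N : ℕ, ∃ ℓ : ℕ, ℓ.Prime ∧ N < ℓ ∧ ∃ c : ℝ, 0 < c ∧
      ∀ᶠ X : ℝ in atTop,
        c * X / Real.log X ≤
          ({p : Nat.Primes | ((p : ℕ) : ℝ) ≤ X ∧ a p ≠ 0 ∧ (ℓ : ℤ) ∣ a p}.ncard : ℝ))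
    (P : Polynomial ℤ) (hP : P ≠ 0) :
    {p : Nat.Primes | ¬ ((p : ℕ) : ℤ) ∣ P.eval (a p)}.Infinite := by
  classical
  by_contra hfin
  rw [Set.not_infinite] at hfin
  have hroots : {x : ℤ | P.IsRoot x}.Finite := P.finite_setOf_isRoot hP
  obtain ⟨N, hN⟩ : ∃ N : ℕ, ∀ x : ℤ, P.eval x = 0 → x.natAbs ≤ N :=
    ⟨(hroots.toFinset.image Int.natAbs).sup id,
      fun x hx => Finset.le_sup (f := id) (Finset.mem_image_of_mem _ (hroots.mem_toFinset.mpr hx))⟩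
  obtain ⟨ℓ, hℓp, hNℓ, c, hc, hev⟩ := hdens N
  set D : ℕ := P.natDegree with hD
  set C : ℝ := ∑ i ∈ Finset.range (D + 1), |((P.coeff i : ℤ) : ℝ)| with hCdef
  have hC0 : 0 ≤ C := Finset.sum_nonneg fun _ _ => abs_nonneg _
  set S : Finset Nat.Primes := hfin.toFinset with hSdef
  set B : ℝ := (S.card : ℝ) with hBdef
  have hB0 : 0 ≤ B := Nat.cast_nonneg _
  set Kc : ℝ := (D : ℝ) + 1 with hKcdef
  have hKc1 : 1 ≤ Kc := by
    have : (0:ℝ) ≤ (D:ℝ) := Nat.cast_nonneg _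
    linarith
  have h2K : (0:ℝ) < 2 + 2 * Kc := by linarith
  set ε : ℝ := c / (2 * (2 + 2 * Kc)) with hεdef
  have hε : 0 < ε := by positivity
  -- key nonvanishing
  have hPv : ∀ v : ℤ, v ≠ 0 → (ℓ : ℤ) ∣ v → P.eval v ≠ 0 := by
    intro v hv0 hdv h0
    have h1 : ℓ ∣ v.natAbs := Int.natCast_dvd.mp hdv
    have h2 : ℓ ≤ v.natAbs := Nat.le_of_dvd (Int.natAbs_pos.mpr hv0) h1
    have h3 := hN v h0
    omega
  -- eventual log bound
  have hlog : ∀ᶠ X : ℝ in atTop, Real.log X ≤ ε * Real.sqrt X := by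
    have h := (isLittleO_log_rpow_atTop one_half_pos).def hε
    filter_upwards [h, eventually_ge_atTop (1 : ℝ)] with X hX hX1
    have h0 : (0:ℝ) ≤ X := le_trans zero_le_one hX1
    have := le_trans (le_abs_self _) ((Real.norm_eq_abs _ ▸ hX).trans_eq rfl)
    calc Real.log X ≤ ε * ‖X ^ ((1:ℝ)/2)‖ := by
          simpa [Real.norm_eq_abs] using le_trans (le_abs_self _) hX
      _ = ε * Real.sqrt X := by
          rw [Real.norm_eq_abs, abs_of_nonneg (Real.rpow_nonneg h0 _), Real.sqrt_eq_rpow]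
  have hbig : ∀ᶠ X : ℝ in atTop,
      (4:ℝ) ≤ X ∧ C * 2 ^ D < X ∧ (B + 1 + Kc) ^ 2 ≤ X := by
    filter_upwards [eventually_ge_atTop (4:ℝ), eventually_gt_atTop (C * 2 ^ D),
      eventually_ge_atTop ((B + 1 + Kc) ^ 2)] with X h1 h2 h3
    exact ⟨h1, h2, h3⟩
  obtain ⟨X, hXev, ⟨hX4, hXC, hXB2⟩, hXlog⟩ := (hev.and (hbig.and hlog)).exists
  have hX0 : (0:ℝ) ≤ X := by linarith
  have hX1 : (1:ℝ) < X := by linarith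
  set s : ℝ := Real.sqrt X with hsdef
  have hs0 : 0 ≤ s := Real.sqrt_nonneg X
  have hs1 : 1 ≤ s := by
    rw [hsdef, show (1:ℝ) = Real.sqrt 1 by simp]
    exact Real.sqrt_le_sqrt (by linarith)
  have hsB : B + 1 + Kc ≤ s := (Real.le_sqrt (by linarith) hX0).mpr hXB2
  have hss : s * s = X := Real.mul_self_sqrt hX0
  have hlogpos : 0 < Real.log X := Real.log_pos hX1
  have h2s1 : (1:ℝ) ≤ 2 * s := by linarith
  -- the finite set of primes counted
  set Aset : Set Nat.Primes :=
    {p : Nat.Primes | ((p : ℕ) : ℝ) ≤ X ∧ a p ≠ 0 ∧ (ℓ : ℤ) ∣ a p} with hAsetdef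
  have hAfin : Aset.Finite := by
    have hfin2 : {p : Nat.Primes | (p : ℕ) ≤ ⌊X⌋₊}.Finite :=
      Set.Finite.preimage (Nat.Primes.coe_nat_injective.injOn)
        (Set.finite_Iic ⌊X⌋₊)
    exact hfin2.subset fun p hp => Nat.le_floor hp.1
  set A : Finset Nat.Primes := hAfin.toFinset with hAdef
  have hmemA : ∀ p : Nat.Primes,
      p ∈ A ↔ (((p : ℕ) : ℝ) ≤ X ∧ a p ≠ 0 ∧ (ℓ : ℤ) ∣ a p) := by
    intro p
    rw [hAdef, Set.Finite.mem_toFinset, hAsetdef, Set.mem_setOf_eq]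
  have hcardA : c * X / Real.log X ≤ (A.card : ℝ) := by
    rw [hAdef, ← Set.ncard_eq_toFinset_card Aset hAfin]
    exact hXev
  -- split A
  set Psmall : Finset Nat.Primes := A.filter (fun p => ((p : ℕ) : ℝ) ≤ s) with hPsdef
  set T : Finset Nat.Primes := A.filter (fun p => p ∉ S ∧ s < ((p : ℕ) : ℝ)) with hTdef
  have hsplit : A ⊆ S ∪ Psmall ∪ T := by
    intro p hp
    by_cases h1 : p ∈ S
    · exact Finset.mem_union_left _ (Finset.mem_union_left _ h1)
    by_cases h2 : ((p : ℕ) : ℝ) ≤ s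
    · exact Finset.mem_union_left _ (Finset.mem_union_right _ (Finset.mem_filter.mpr ⟨hp, h2⟩))
    · exact Finset.mem_union_right _ (Finset.mem_filter.mpr ⟨hp, h1, lt_of_not_ge h2⟩)
  -- bound on small primes
  have hPsmall : (Psmall.card : ℝ) ≤ s + 1 := by
    have h1 : Psmall.card ≤ (Finset.range (⌊s⌋₊ + 1)).card := by
      apply Finset.card_le_card_of_injOn (fun p : Nat.Primes => (p : ℕ))
      · intro p hp
        simp only [Finset.mem_coe, Finset.mem_range, Nat.lt_succ_iff]
        exact Nat.le_floor (Finset.mem_filter.mp hp).2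
      · exact Nat.Primes.coe_nat_injective.injOn
    rw [Finset.card_range] at h1
    have h2 : (⌊s⌋₊ : ℝ) ≤ s := Nat.floor_le hs0
    have h3 : (Psmall.card : ℝ) ≤ ((⌊s⌋₊ + 1 : ℕ) : ℝ) := by exact_mod_cast h1
    push_cast at h3
    linarith
  -- facts about elements of T
  have hTfact : ∀ p ∈ T, |((a p : ℤ) : ℝ)| ≤ 2 * s ∧ a p ≠ 0 ∧ (ℓ : ℤ) ∣ a p ∧
      ((p : ℕ) : ℤ) ∣ P.eval (a p) ∧ s < ((p : ℕ) : ℝ) := by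
    intro p hp
    obtain ⟨hpA, hpS, hps⟩ := Finset.mem_filter.mp hp
    obtain ⟨hpX, hap0, hapl⟩ := (hmemA p).mp hpA
    have hdvd : ((p : ℕ) : ℤ) ∣ P.eval (a p) := by
      by_contra hnd
      exact hpS (by rw [hSdef, Set.Finite.mem_toFinset]; exact hnd)
    refine ⟨?_, hap0, hapl, hdvd, hps⟩
    calc |((a p : ℤ) : ℝ)| ≤ 2 * Real.sqrt ((p : ℕ) : ℝ) := hHasse p
      _ ≤ 2 * s := by
          have := Real.sqrt_le_sqrt hpX
          linarith
  -- fiber bound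
  have hTcard : T.card ≤ (D + 1) * (T.image a).card := by
    apply Finset.card_le_mul_card_image
    intro v hv
    obtain ⟨p₀, hp₀T, hp₀v⟩ := Finset.mem_image.mp hv
    obtain ⟨habs, h0, hdl, _, _⟩ := hTfact p₀ hp₀T
    rw [hp₀v] at habs h0 hdl
    have hPv0 : P.eval v ≠ 0 := hPv v h0 hdl
    by_contra hgt
    push_neg at hgt
    set F : Finset Nat.Primes := T.filter (fun p => a p = v) with hFdef
    have hFb : s ^ F.card ≤ |((P.eval v : ℤ) : ℝ)| := by
      apply primes_card_bound F _ hPv0 s hs0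
      intro p hp
      obtain ⟨hpT, hpv⟩ := Finset.mem_filter.mp hp
      obtain ⟨_, _, _, hdvd, hps⟩ := hTfact p hpT
      rw [hpv] at hdvd
      exact ⟨le_of_lt hps, hdvd⟩
    have hub : |((P.eval v : ℤ) : ℝ)| ≤ C * (2 * s) ^ D :=
      eval_abs_bound P v (2 * s) h2s1 habs
    have hpow : s ^ (D + 2) ≤ s ^ F.card := pow_le_pow_right₀ hs1 (by omega)
    have hchain : s ^ D * X ≤ C * (2 ^ D * s ^ D) := by
      calc s ^ D * X = s ^ (D + 2) := by rw [pow_add, sq, hss]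
        _ ≤ s ^ F.card := hpow
        _ ≤ |((P.eval v : ℤ) : ℝ)| := hFb
        _ ≤ C * (2 * s) ^ D := hub
        _ = C * (2 ^ D * s ^ D) := by rw [mul_pow]
    have hsD : 0 < s ^ D := pow_pos (by linarith) D
    nlinarith
  -- image card bound
  have himg : ((T.image a).card : ℝ) ≤ 2 * s + 1 := by
    have h1 : (T.image a).card ≤ (Finset.Icc (-(⌊s⌋₊ : ℤ)) (⌊s⌋₊ : ℤ)).card := by
      apply Finset.card_le_card_of_injOn (fun v : ℤ => v / (ℓ : ℤ))
      · intro v hv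
        obtain ⟨p, hpT, rfl⟩ := Finset.mem_image.mp hv
        obtain ⟨habs, h0, hdl, _, _⟩ := hTfact p hpT
        set w : ℤ := a p / (ℓ : ℤ) with hwdef
        have hwm : (ℓ : ℤ) * w = a p := Int.mul_ediv_cancel' hdl
        have hl2 : (2:ℝ) ≤ (ℓ : ℝ) := by exact_mod_cast hℓp.two_le
        have habs2 : (ℓ : ℝ) * |(w : ℝ)| ≤ 2 * s := by
          calc (ℓ : ℝ) * |(w : ℝ)| = |((a p : ℤ) : ℝ)| := by
                rw [← hwm]; push_cast
                rw [abs_mul, abs_of_nonneg (by positivity : (0:ℝ) ≤ (ℓ:ℝ))]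
            _ ≤ 2 * s := habs
        have hws : |(w : ℝ)| ≤ s := by nlinarith [abs_nonneg ((w : ℝ))]
        have hwn : w.natAbs ≤ ⌊s⌋₊ := by
          apply Nat.le_floor
          rw [Nat.cast_natAbs, Int.cast_abs]
          exact hws
        simp only [Finset.mem_coe, Finset.mem_Icc]
        rw [← hwdef]
        omega
      · intro v1 hv1 v2 hv2 heq
        obtain ⟨p1, hp1T, rfl⟩ := Finset.mem_image.mp hv1
        obtain ⟨p2, hp2T, rfl⟩ := Finset.mem_image.mp hv2
        obtain ⟨_, _, hdl1, _, _⟩ := hTfact p1 hp1T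
        obtain ⟨_, _, hdl2, _, _⟩ := hTfact p2 hp2T
        have e1 : (ℓ : ℤ) * (a p1 / (ℓ : ℤ)) = a p1 := Int.mul_ediv_cancel' hdl1
        have e2 : (ℓ : ℤ) * (a p2 / (ℓ : ℤ)) = a p2 := Int.mul_ediv_cancel' hdl2
        simp only at heq
        rw [← e1, ← e2, heq]
    have h2 : (Finset.Icc (-(⌊s⌋₊ : ℤ)) (⌊s⌋₊ : ℤ)).card = 2 * ⌊s⌋₊ + 1 := by
      rw [Int.card_Icc]
      omega
    rw [h2] at h1
    have h3 : (⌊s⌋₊ : ℝ) ≤ s := Nat.floor_le hs0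
    have h4 : ((T.image a).card : ℝ) ≤ ((2 * ⌊s⌋₊ + 1 : ℕ) : ℝ) := by exact_mod_cast h1
    push_cast at h4
    linarith
  -- assemble
  have hTreal : (T.card : ℝ) ≤ Kc * (2 * s + 1) := by
    have h1 : (T.card : ℝ) ≤ ((D + 1 : ℕ) : ℝ) * ((T.image a).card : ℝ) := by
      exact_mod_cast hTcard
    have h2 : ((D + 1 : ℕ) : ℝ) = Kc := by rw [hKcdef]; push_cast; ring
    rw [h2] at h1
    calc (T.card : ℝ) ≤ Kc * ((T.image a).card : ℝ) := h1
      _ ≤ Kc * (2 * s + 1) := by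
          apply mul_le_mul_of_nonneg_left himg (by linarith)
  have htotal : (A.card : ℝ) ≤ B + (s + 1) + Kc * (2 * s + 1) := by
    have h1 : A.card ≤ S.card + Psmall.card + T.card := by
      calc A.card ≤ (S ∪ Psmall ∪ T).card := Finset.card_le_card hsplit
        _ ≤ (S ∪ Psmall).card + T.card := Finset.card_union_le _ _
        _ ≤ S.card + Psmall.card + T.card := by
            have := Finset.card_union_le S Psmall
            omega
    have h2 : (A.card : ℝ) ≤ (S.card : ℝ) + (Psmall.card : ℝ) + (T.card : ℝ) := by
      exact_mod_cast h1
    linarith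
  have hUB : B + (s + 1) + Kc * (2 * s + 1) < c * X / Real.log X := by
    rw [lt_div_iff₀ hlogpos]
    have hU2 : B + (s + 1) + Kc * (2 * s + 1) ≤ (2 + 2 * Kc) * s := by nlinarith
    have hεc : (2 + 2 * Kc) * ε = c / 2 := by
      rw [hεdef]; field_simp
    calc (B + (s + 1) + Kc * (2 * s + 1)) * Real.log X
        ≤ ((2 + 2 * Kc) * s) * Real.log X :=
          mul_le_mul_of_nonneg_right hU2 hlogpos.le
      _ ≤ ((2 + 2 * Kc) * s) * (ε * s) := by
          apply mul_le_mul_of_nonneg_left hXlog (by positivity)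
      _ = (2 + 2 * Kc) * ε * (s * s) := by ring
      _ = (c / 2) * X := by rw [hss, hεc]
      _ < c * X := by nlinarith
  exact absurd (hcardA.trans htotal) (not_le.mpr hUB)
end

section
/- There exists an injective ring homomorphism ι from ℚ to the poor man's adèle ring 𝒜 such that for every integer n, ι(n) is the class in 𝒜 of the sequence (n mod p)_p indexed by primes p. (In particular, every nonzero integer maps to a unit of 𝒜, and 𝒜 is a ℚ-algebra via ι.) -/
noncomputable section

/-- The ideal of sequences `(t_p)_p ∈ ∏_p ℤ/pℤ` with finitely many nonzero components. -/
def pmaIdeal : Ideal (∀ p : Nat.Primes, ZMod p) where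
  carrier := {f | {p | f p ≠ 0}.Finite}
  zero_mem' := by simp
  add_mem' := by
    intro f g hf hg
    refine (hf.union hg).subset fun p hp => ?_
    by_contra h
    simp only [Set.mem_union, Set.mem_setOf_eq, not_or, not_not] at h
    exact hp (by simp [h.1, h.2])
  smul_mem' := by
    intro r f hf
    refine hf.subset fun p hp => ?_
    by_contra h
    simp only [Set.mem_setOf_eq, not_not] at h
    exact hp (by simp [h])

/-- The poor man's adèle ring `𝒜 = (∏_p ℤ/pℤ)/(⊕_p ℤ/pℤ)`. -/
abbrev PMA := (∀ p : Nat.Primes, ZMod p) ⧸ pmaIdeal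

def phi : ℤ →+* PMA :=
  (Ideal.Quotient.mk pmaIdeal).comp (Pi.ringHom fun p => Int.castRingHom (ZMod p))

lemma finite_zero_set (n : ℤ) (hn : n ≠ 0) : {p : Nat.Primes | (n : ZMod p) = 0}.Finite := by
  have : {p : Nat.Primes | (n : ZMod p) = 0} ⊆ (↑) ⁻¹' {d : ℕ | d ∣ n.natAbs} := by
    intro p hp
    haveI := Fact.mk p.2
    simp only [Set.mem_setOf_eq] at hp ⊢
    have := (ZMod.intCast_zmod_eq_zero_iff_dvd n p).mp hp
    exact Int.natCast_dvd_natCast.mp (Int.dvd_natAbs.mpr this)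
  refine Set.Finite.subset ?_ this
  have hfin : {d : ℕ | d ∣ n.natAbs}.Finite := by
    apply Set.Finite.subset (Set.finite_Icc 0 n.natAbs)
    intro d hd
    exact ⟨Nat.zero_le _, Nat.le_of_dvd (Int.natAbs_pos.mpr hn) hd⟩
  exact hfin.preimage (fun a _ b _ h => Nat.Primes.coe_nat_injective h)

lemma phi_unit (n : ℤ) (hn : n ≠ 0) : IsUnit (phi n) := by
  classical
  set g : ∀ p : Nat.Primes, ZMod p := fun p => if (n : ZMod p) = 0 then 0 else (n : ZMod p)⁻¹
  refine IsUnit.of_mul_eq_one (a := phi n) (Ideal.Quotient.mk pmaIdeal g) ?_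
  have : phi n * Ideal.Quotient.mk pmaIdeal g
      = Ideal.Quotient.mk pmaIdeal (fun p => (n : ZMod p) * g p) := rfl
  rw [this, ← sub_eq_zero, ← map_one (Ideal.Quotient.mk pmaIdeal), ← map_sub,
    Ideal.Quotient.eq_zero_iff_mem]
  refine (finite_zero_set n hn).subset fun p hp => ?_
  by_contra h
  simp only [Set.mem_setOf_eq, not_not] at hp h
  haveI := Fact.mk p.2
  apply hp
  simp only [Pi.sub_apply, Pi.one_apply, g]
  rw [if_neg h, mul_inv_cancel₀ h, sub_self]

instance : Nontrivial PMA := by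
  refine ⟨1, 0, fun h => ?_⟩
  have : (1 : ∀ p : Nat.Primes, ZMod p) ∈ pmaIdeal := by
    rwa [← Ideal.Quotient.eq_zero_iff_mem]
  have hfin : {p : Nat.Primes | (1 : ZMod p) ≠ 0}.Finite := this
  have : {p : Nat.Primes | (1 : ZMod p) ≠ 0} = Set.univ := by
    ext p
    haveI := Fact.mk p.2
    simp [one_ne_zero]
  rw [this] at hfin
  haveI : Infinite Nat.Primes := Nat.Primes.infinite
  exact Set.infinite_univ hfin

/-- There is an injective ring homomorphism `ι : ℚ →+* 𝒜` into the
poor man's adèle ring sending every integer `n` to the class of `(n mod p)_p`; in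
particular every nonzero integer maps to a unit of `𝒜`. -/
theorem exists_diagonal_embedding_rat_PMA :
    ∃ ι : ℚ →+* PMA, Function.Injective ι ∧
      (∀ n : ℤ, ι n = Ideal.Quotient.mk pmaIdeal (fun p => ((n : ZMod p)))) ∧
      (∀ n : ℤ, n ≠ 0 → IsUnit (ι n)) := by
  have hu : ∀ y : nonZeroDivisors ℤ, IsUnit (phi y) := fun y =>
    phi_unit y (nonZeroDivisors.coe_ne_zero y)
  refine ⟨IsLocalization.lift (M := nonZeroDivisors ℤ) (S := ℚ) hu, ?_, ?_, ?_⟩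
  · exact RingHom.injective _
  · intro n
    have := IsLocalization.lift_eq (M := nonZeroDivisors ℤ) (S := ℚ) hu n
    have h2 : ((algebraMap ℤ ℚ) n : ℚ) = (n : ℚ) := by simp
    rw [h2] at this
    exact this
  · intro n hn
    have := IsLocalization.lift_eq (M := nonZeroDivisors ℤ) (S := ℚ) hu n
    have h2 : ((algebraMap ℤ ℚ) n : ℚ) = (n : ℚ) := by simp
    rw [h2] at this
    rw [this]
    exact phi_unit n hn
end
end

section
/- Let K be a number field, let b_1, …, b_k be elements of its ring of integers 𝒪_K, and let a be a function assigning to each prime p an integer a_p with |a_p| ≤ 2√p. Let ℓ be a prime such that for every index i, if b_i equals a nonzero rational integer m (i.e., b_i is the image of m ∈ ℤ \ {0} in 𝒪_K), then ℓ does not divide m. Assume there is a constant c > 0 such that for all sufficiently large real X the number of primes p ≤ X with a_p ≠ 0 and ℓ ∣ a_p is at least c·X/log X. Then there exist infinitely many primes p such that a_p ≠ 0, ℓ ∣ a_p, and for every index i one has a_p ≠ b_i (as elements of 𝒪_K) and p does not divide the norm N_{K/ℚ}(a_p − b_i). -/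
open NumberField Filter

open Module in
private lemma norm_abs_le_aux (K : Type*) [Field K] [NumberField K] (x : 𝓞 K) (B : ℝ)
    (hB : ∀ σ : K →ₐ[ℚ] ℂ, ‖σ (x : K)‖ ≤ B) :
    |((Algebra.norm ℤ x : ℤ) : ℝ)| ≤ B ^ (finrank ℚ K) := by
  have h1 : ((Algebra.norm ℤ x : ℤ) : ℂ) = ∏ σ : K →ₐ[ℚ] ℂ, σ (x : K) := by
    have h2 := Algebra.norm_eq_prod_embeddings ℚ ℂ (x : K)
    rw [← Algebra.coe_norm_int] at h2
    rw [← h2]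
    simp [eq_ratCast]
  calc |((Algebra.norm ℤ x : ℤ) : ℝ)| = ‖((Algebra.norm ℤ x : ℤ) : ℂ)‖ := by
        rw [Complex.norm_intCast]
    _ = ∏ σ : K →ₐ[ℚ] ℂ, ‖σ (x : K)‖ := by rw [h1, norm_prod]
    _ ≤ ∏ _σ : K →ₐ[ℚ] ℂ, B :=
        Finset.prod_le_prod (fun _ _ => norm_nonneg _) (fun σ _ => hB σ)
    _ = B ^ (finrank ℚ K) := by rw [Finset.prod_const, Finset.card_univ, AlgHom.card]

set_option maxHeartbeats 4000000 in
/-- Let `K` be a number field, `b₁, …, b_k ∈ 𝒪_K`, and let `a` assign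
to each prime `p` an integer with `|a p| ≤ 2√p`. Let `ℓ` be a prime not dividing any
nonzero rational integer among the `bᵢ`. If for some `c > 0` and all sufficiently large
`X` the number of primes `p ≤ X` with `a p ≠ 0` and `ℓ ∣ a p` is at least `c·X/log X`,
then there are infinitely many primes `p` with `a p ≠ 0`, `ℓ ∣ a p`, and for every `i`,
`a p ≠ bᵢ` in `𝒪_K` and `p ∤ N_{K/ℚ}(a p − bᵢ)`. -/
theorem infinitely_many_primes_not_dividing_norms
    (K : Type*) [Field K] [NumberField K] (k : ℕ) (b : Fin k → 𝓞 K)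
    (a : Nat.Primes → ℤ)
    (hHasse : ∀ p : Nat.Primes, |(a p : ℝ)| ≤ 2 * Real.sqrt (p : ℕ))
    (ℓ : ℕ) (hℓ : ℓ.Prime)
    (hℓb : ∀ i : Fin k, ∀ m : ℤ, m ≠ 0 → b i = (m : 𝓞 K) → ¬ (ℓ : ℤ) ∣ m)
    (hdens : ∃ c : ℝ, 0 < c ∧
      ∀ᶠ X : ℝ in atTop,
        c * X / Real.log X ≤
          ({p : Nat.Primes | ((p : ℕ) : ℝ) ≤ X ∧ a p ≠ 0 ∧ (ℓ : ℤ) ∣ a p}.ncard : ℝ)) :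
    {p : Nat.Primes | a p ≠ 0 ∧ (ℓ : ℤ) ∣ a p ∧ ∀ i : Fin k,
      ((a p : 𝓞 K) ≠ b i ∧
        ¬ ((p : ℕ) : ℤ) ∣ Algebra.norm ℤ ((a p : 𝓞 K) - b i))}.Infinite := by
  classical
  obtain ⟨c, hc, hdensX⟩ := hdens
  set n := Module.finrank ℚ K with hn
  -- uniform bound on the embeddings of the `b i`
  obtain ⟨B0, hB0⟩ := Finite.exists_le
    (fun iσ : Fin k × (K →ₐ[ℚ] ℂ) => ‖iσ.2 (b iσ.1 : K)‖)
  set B := max B0 0 with hBdef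
  have hBnonneg : 0 ≤ B := le_max_right _ _
  have hB : ∀ (i : Fin k) (σ : K →ₐ[ℚ] ℂ), ‖σ (b i : K)‖ ≤ B :=
    fun i σ => le_trans (hB0 (i, σ)) (le_max_left _ _)
  -- Lemma A : `a p` is never equal to some `b i` when `ℓ ∣ a p ≠ 0`
  have hA : ∀ (t : ℤ), t ≠ 0 → (ℓ : ℤ) ∣ t → ∀ i : Fin k, (t : 𝓞 K) ≠ b i := by
    intro t h0 hdvd i hEq
    exact hℓb i t h0 hEq.symm hdvd
  -- norm bound
  have hnorm : ∀ (t : ℤ) (i : Fin k),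
      |((Algebra.norm ℤ ((t : 𝓞 K) - b i) : ℤ) : ℝ)| ≤ (|(t : ℝ)| + B) ^ n := by
    intro t i
    apply norm_abs_le_aux
    intro σ
    have h1 : ((((t : 𝓞 K) - b i : 𝓞 K) : K)) = (t : K) - (b i : K) := by
      push_cast
      simp
    rw [h1, map_sub, map_intCast]
    calc ‖(t : ℂ) - σ (b i : K)‖ ≤
        ‖(t : ℂ)‖ + ‖σ (b i : K)‖ := by
          simpa using norm_sub_le (t : ℂ) (σ (b i : K))
      _ ≤ |(t : ℝ)| + B := by
          refine add_le_add ?_ (hB i σ)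
          simp [Complex.norm_intCast]
  -- suppose the good set is finite
  by_contra hGinf
  rw [Set.not_infinite] at hGinf
  set Gf : Finset ℕ := hGinf.toFinset.image (fun p : Nat.Primes => (p : ℕ)) with hGfdef
  set g : ℕ := Gf.card with hg
  set C : ℝ := (g : ℝ) + k + 10 * n * k + 1 with hCdef
  have hC0 : 0 < C := by positivity
  have hC1 : 1 ≤ C := by
    have h1 : (0:ℝ) ≤ (g : ℝ) + k + 10 * n * k := by positivity
    linarith
  set ε : ℝ := c / (4 * C) with hεdef
  have hε : 0 < ε := by positivity
  have hε4 : 4 * C * ε = c := by rw [hεdef]; exact mul_div_cancel₀ c (by positivity)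
  -- pick a large X
  have hlittle := (isLittleO_log_rpow_atTop (r := (1:ℝ)/2) one_half_pos).def hε
  obtain ⟨X, hd, hlog, hXb, hX3⟩ :=
    (hdensX.and (hlittle.and ((eventually_ge_atTop ((max 3 (B+1))^2)).and
      (eventually_ge_atTop (3:ℝ))))).exists
  have hX0 : (0:ℝ) ≤ X := by linarith
  set u : ℝ := Real.sqrt X with hudef
  have hu : max 3 (B+1) ≤ u := by
    rw [hudef, Real.le_sqrt' (lt_of_lt_of_le (by norm_num) (le_max_left 3 (B+1)))]
    exact hXb
  have hu3 : 3 ≤ u := le_trans (le_max_left _ _) hu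
  have huB : B + 1 ≤ u := le_trans (le_max_right _ _) hu
  have hu1 : (1:ℝ) ≤ u := by linarith
  have hu0 : (0:ℝ) < u := by linarith
  have hXu : u * u = X := Real.mul_self_sqrt hX0
  have hlogpos : 0 < Real.log X := Real.log_pos (by linarith)
  have hlogu : Real.log X ≤ ε * u := by
    have h1 : ‖Real.log X‖ ≤ ε * ‖X ^ ((1:ℝ)/2)‖ := hlog
    rw [Real.norm_eq_abs, Real.norm_eq_abs, abs_of_pos hlogpos,
      abs_of_nonneg (Real.rpow_nonneg hX0 _)] at h1
    rw [hudef, Real.sqrt_eq_rpow]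
    exact h1
  -- Finset setup
  set N : ℕ := ⌊X⌋₊ with hN
  set U : ℕ := ⌊u⌋₊ with hU
  set T : ℤ := ⌊2 * u⌋ with hT
  set f : ℕ → ℤ := fun q => if hq : q.Prime then a ⟨q, hq⟩ else 0 with hfdef
  have hf : ∀ p : Nat.Primes, f (p : ℕ) = a p := by
    intro p
    simp only [hfdef, p.2, dif_pos, Subtype.coe_eta]
    rfl
  set Sf : Finset ℕ :=
    (Finset.range (N+1)).filter (fun q => q.Prime ∧ f q ≠ 0 ∧ (ℓ : ℤ) ∣ f q) with hSf
  -- step 1: ncard ≤ Sf.card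
  have hS1 : ({p : Nat.Primes | ((p : ℕ) : ℝ) ≤ X ∧ a p ≠ 0 ∧ (ℓ : ℤ) ∣ a p}.ncard : ℝ)
      ≤ (Sf.card : ℝ) := by
    have h2 : {p : Nat.Primes | ((p : ℕ) : ℝ) ≤ X ∧ a p ≠ 0 ∧ (ℓ : ℤ) ∣ a p}.ncard
        ≤ (↑Sf : Set ℕ).ncard := by
      refine Set.ncard_le_ncard_of_injOn (fun p => (p : ℕ)) ?_
        (fun p _ q _ h => Subtype.ext h) Sf.finite_toSet
      rintro p ⟨hpX, h0, hdl⟩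
      rw [Finset.mem_coe, hSf, Finset.mem_filter, Finset.mem_range]
      refine ⟨Nat.lt_succ_of_le (Nat.le_floor hpX), p.2, ?_, ?_⟩
      · rw [hf]; exact h0
      · rw [hf]; exact hdl
    rw [Set.ncard_coe_finset] at h2
    exact_mod_cast h2
  -- elements of Sf are at most X
  have hSfle : ∀ q ∈ Sf, (q : ℝ) ≤ X := by
    intro q hq
    rw [hSf, Finset.mem_filter, Finset.mem_range] at hq
    have := Nat.lt_succ_iff.1 hq.1
    calc (q : ℝ) ≤ (N : ℝ) := by exact_mod_cast this
      _ ≤ X := Nat.floor_le hX0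
  -- the Hasse bound for q ∈ Sf
  have hSfbound : ∀ q ∈ Sf, |(f q : ℝ)| ≤ 2 * u := by
    intro q hq
    have hqX := hSfle q hq
    rw [hSf, Finset.mem_filter] at hq
    obtain ⟨hqr, hqp, h0, hdl⟩ := hq
    have := hHasse ⟨q, hqp⟩
    rw [← hf ⟨q, hqp⟩] at this
    refine le_trans this ?_
    have : Real.sqrt q ≤ u := by
      rw [hudef]; exact Real.sqrt_le_sqrt hqX
    linarith
  -- bad finsets
  set Bf : Fin k → Finset ℕ := fun i =>
    Sf.filter (fun q => (q : ℤ) ∣ Algebra.norm ℤ ((f q : 𝓞 K) - b i)) with hBf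
  -- step 2 : Sf covered by Gf and the Bf i
  have hS2 : Sf ⊆ Gf ∪ Finset.univ.biUnion Bf := by
    intro q hq
    have hq' := hq
    rw [hSf, Finset.mem_filter, Finset.mem_range] at hq'
    obtain ⟨hqN, hqp, h0, hdl⟩ := hq'
    by_cases hEx : ∃ i : Fin k, (q : ℤ) ∣ Algebra.norm ℤ ((f q : 𝓞 K) - b i)
    · obtain ⟨i, hi⟩ := hEx
      exact Finset.mem_union_right _ (Finset.mem_biUnion.2
        ⟨i, Finset.mem_univ _, Finset.mem_filter.2 ⟨hq, hi⟩⟩)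
    · push_neg at hEx
      apply Finset.mem_union_left
      have hpG : (⟨q, hqp⟩ : Nat.Primes) ∈
          {p : Nat.Primes | a p ≠ 0 ∧ (ℓ : ℤ) ∣ a p ∧ ∀ i : Fin k,
            ((a p : 𝓞 K) ≠ b i ∧
              ¬ ((p : ℕ) : ℤ) ∣ Algebra.norm ℤ ((a p : 𝓞 K) - b i))} := by
        have hfq : a (⟨q, hqp⟩ : Nat.Primes) = f q := (hf ⟨q, hqp⟩).symm
        refine ⟨by rw [hfq]; exact h0, by rw [hfq]; exact hdl, fun i => ⟨?_, ?_⟩⟩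
        · rw [hfq]; exact hA (f q) h0 hdl i
        · rw [hfq]; exact hEx i
      exact Finset.mem_image.2 ⟨⟨q, hqp⟩, hGinf.mem_toFinset.2 hpG, rfl⟩
  -- small primes
  set smallf : Finset ℕ := (Finset.range (U+1)).filter Nat.Prime with hsmallf
  have hsmallcard : ((smallf.card : ℕ) : ℝ) ≤ u + 1 := by
    have h1 : smallf.card ≤ U + 1 := le_trans (Finset.card_filter_le _ _)
      (by rw [Finset.card_range])
    have h2 : (U : ℝ) ≤ u := Nat.floor_le (le_of_lt hu0)
    calc ((smallf.card : ℕ) : ℝ) ≤ ((U + 1 : ℕ) : ℝ) := by exact_mod_cast h1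
      _ ≤ u + 1 := by push_cast; linarith
  -- big primes
  set bigf : Fin k → Finset ℕ := fun i => (Bf i).filter (fun q => U < q) with hbigf
  have hsplit : ∀ i : Fin k, Bf i ⊆ smallf ∪ bigf i := by
    intro i q hq
    by_cases hUq : U < q
    · exact Finset.mem_union_right _ (Finset.mem_filter.2 ⟨hq, hUq⟩)
    · apply Finset.mem_union_left
      push_neg at hUq
      have hqp : q.Prime := by
        have := Finset.mem_filter.1 (Finset.mem_filter.1 hq).1
        exact (this.2).1
      exact Finset.mem_filter.2 ⟨Finset.mem_range.2 (Nat.lt_succ_of_le hUq), hqp⟩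
  -- image of f on bigf lands in Icc (-T) T
  have himage : ∀ i : Fin k, (bigf i).image f ⊆ Finset.Icc (-T) T := by
    intro i t ht
    obtain ⟨q, hq, hfq⟩ := Finset.mem_image.1 ht
    have hqSf : q ∈ Sf := (Finset.mem_filter.1 (Finset.mem_filter.1 hq).1).1
    have habs := hSfbound q hqSf
    rw [hfq] at habs
    rw [Finset.mem_Icc]
    constructor
    · rw [neg_le]
      rw [hT, Int.le_floor]
      push_cast
      have := neg_abs_le (t : ℝ)
      linarith [abs_le.1 habs]
    · rw [hT, Int.le_floor]
      push_cast
      linarith [abs_le.1 habs]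
  have hIcccard : (((Finset.Icc (-T) T).card : ℕ) : ℝ) ≤ 4 * u + 1 := by
    have hT0 : 0 ≤ T := Int.le_floor.2 (by push_cast; linarith)
    have hTu : (T : ℝ) ≤ 2 * u := Int.floor_le _
    rw [Int.card_Icc]
    have h1 : (T + 1 - -T) = 2 * T + 1 := by ring
    rw [h1]
    have h2 : (((2 * T + 1).toNat : ℕ) : ℝ) = ((2 * T + 1 : ℤ) : ℝ) := by
      rw [← Int.cast_natCast, Int.toNat_of_nonneg (by linarith)]
    rw [h2]
    push_cast
    linarith
  -- fiber bound
  have hfiber : ∀ i : Fin k, ∀ t ∈ (bigf i).image f,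
      ((bigf i).filter (fun q => f q = t)).card ≤ 2 * n := by
    intro i t ht
    obtain ⟨q₀, hq₀, hfq₀⟩ := Finset.mem_image.1 ht
    have hq₀Bf : q₀ ∈ Bf i := (Finset.mem_filter.1 hq₀).1
    have hq₀Sf : q₀ ∈ Sf := (Finset.mem_filter.1 hq₀Bf).1
    have hq₀Sf' := Finset.mem_filter.1 hq₀Sf
    obtain ⟨hq₀r, hq₀p, h0, hdl⟩ := hq₀Sf'
    rw [hfq₀] at h0 hdl
    -- |t| ≤ 2u
    have habs : |(t : ℝ)| ≤ 2 * u := by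
      have := hSfbound q₀ hq₀Sf
      rwa [hfq₀] at this
    set M : ℤ := Algebra.norm ℤ ((t : 𝓞 K) - b i) with hM
    have hMne : M ≠ 0 := by
      intro hM0
      have h1 : ((t : 𝓞 K) - b i) ≠ 0 := sub_ne_zero.2 (hA t h0 hdl i)
      exact h1 (Algebra.norm_eq_zero_iff.1 hM0)
    have hMle : ((M.natAbs : ℕ) : ℝ) ≤ u ^ (2 * n) := by
      have h1 : ((M.natAbs : ℕ) : ℝ) = |(M : ℝ)| := by
        rw [Nat.cast_natAbs]; push_cast; ring
      rw [h1]
      refine le_trans (hnorm t i) ?_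
      have h2 : |(t : ℝ)| + B ≤ u * u := by nlinarith
      calc (|(t : ℝ)| + B) ^ n ≤ (u * u) ^ n := by
            apply pow_le_pow_left₀ (by positivity) h2
        _ = u ^ (2 * n) := by rw [pow_mul, sq]
    set F : Finset ℕ := (bigf i).filter (fun q => f q = t) with hF
    -- all fiber elements are primes > u dividing M.natAbs
    have hFprime : ∀ q ∈ F, q.Prime := by
      intro q hq
      have : q ∈ Sf := (Finset.mem_filter.1 (Finset.mem_filter.1
        (Finset.mem_filter.1 hq).1).1).1
      exact ((Finset.mem_filter.1 this).2).1
    have hFdvd : ∀ q ∈ F, q ∣ M.natAbs := by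
      intro q hq
      have hq1 := Finset.mem_filter.1 hq
      have hq2 := Finset.mem_filter.1 hq1.1
      have hdvd : (q : ℤ) ∣ Algebra.norm ℤ ((f q : 𝓞 K) - b i) :=
        (Finset.mem_filter.1 hq2.1).2
      rw [hq1.2] at hdvd
      simpa using Int.natAbs_dvd_natAbs.mpr hdvd
    have hFbig : ∀ q ∈ F, u < (q : ℝ) := by
      intro q hq
      have hq1 := Finset.mem_filter.1 hq
      have hq2 := Finset.mem_filter.1 hq1.1
      have hUq : U < q := hq2.2
      calc u < (U : ℝ) + 1 := by rw [hU]; exact Nat.lt_floor_add_one u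
        _ ≤ (q : ℝ) := by exact_mod_cast Nat.succ_le_of_lt hUq
    -- the product of the fiber primes divides M.natAbs
    have hprodvd : (∏ q ∈ F, q) ∣ M.natAbs :=
      Finset.prod_primes_dvd _ (fun q hq => (hFprime q hq).prime) hFdvd
    have hprodle : (∏ q ∈ F, q) ≤ M.natAbs :=
      Nat.le_of_dvd (Nat.pos_of_ne_zero (Int.natAbs_ne_zero.2 hMne)) hprodvd
    have hpow : u ^ F.card ≤ ((M.natAbs : ℕ) : ℝ) := by
      calc u ^ F.card = ∏ _q ∈ F, u := by rw [Finset.prod_const]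
        _ ≤ ∏ q ∈ F, (q : ℝ) :=
            Finset.prod_le_prod (fun _ _ => le_of_lt hu0)
              (fun q hq => le_of_lt (hFbig q hq))
        _ = ((∏ q ∈ F, q : ℕ) : ℝ) := by push_cast; ring
        _ ≤ ((M.natAbs : ℕ) : ℝ) := by exact_mod_cast hprodle
    have hfinal : u ^ F.card ≤ u ^ (2 * n) := le_trans hpow hMle
    exact (pow_le_pow_iff_right₀ (by linarith : (1:ℝ) < u)).1 hfinal
  -- card of bigf
  have hbigcard : ∀ i : Fin k, ((bigf i).card : ℝ) ≤ (2 * n) * (4 * u + 1) := by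
    intro i
    have h1 : (bigf i).card ≤ (2 * n) * ((bigf i).image f).card :=
      Finset.card_le_mul_card_image _ _ (hfiber i)
    have h2 : ((bigf i).image f).card ≤ (Finset.Icc (-T) T).card :=
      Finset.card_le_card (himage i)
    calc ((bigf i).card : ℝ) ≤ ((2 * n) : ℝ) * (((bigf i).image f).card : ℝ) := by
          exact_mod_cast h1
      _ ≤ ((2 * n) : ℝ) * (4 * u + 1) := by
          apply mul_le_mul_of_nonneg_left _ (by positivity)
          exact le_trans (by exact_mod_cast h2) hIcccard
  -- card of Bf
  have hBfcard : ∀ i : Fin k, ((Bf i).card : ℝ) ≤ (u + 1) + (2 * n) * (4 * u + 1) := by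
    intro i
    have h1 : (Bf i).card ≤ smallf.card + (bigf i).card :=
      le_trans (Finset.card_le_card (hsplit i)) (Finset.card_union_le _ _)
    calc ((Bf i).card : ℝ) ≤ (smallf.card : ℝ) + ((bigf i).card : ℝ) := by
          exact_mod_cast h1
      _ ≤ (u + 1) + (2 * n) * (4 * u + 1) := add_le_add hsmallcard (hbigcard i)
  -- total count
  have htotal : ((Sf.card : ℕ) : ℝ) ≤ (g : ℝ) + k * ((u + 1) + (2 * n) * (4 * u + 1)) := by
    have h1 : Sf.card ≤ Gf.card + ∑ i : Fin k, (Bf i).card := by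
      refine le_trans (Finset.card_le_card hS2) ?_
      refine le_trans (Finset.card_union_le _ _) ?_
      exact add_le_add_right (Finset.card_biUnion_le) _
    have h2 : ((∑ i : Fin k, (Bf i).card : ℕ) : ℝ)
        ≤ (k : ℝ) * ((u + 1) + (2 * n) * (4 * u + 1)) := by
      rw [Nat.cast_sum]
      calc ∑ i : Fin k, (((Bf i).card : ℕ) : ℝ)
          ≤ ∑ _i : Fin k, ((u + 1) + (2 * n) * (4 * u + 1)) :=
            Finset.sum_le_sum (fun i _ => hBfcard i)
        _ = (k : ℝ) * ((u + 1) + (2 * n) * (4 * u + 1)) := by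
            rw [Finset.sum_const, Finset.card_univ, Fintype.card_fin, nsmul_eq_mul]
    calc ((Sf.card : ℕ) : ℝ) ≤ ((Gf.card + ∑ i : Fin k, (Bf i).card : ℕ) : ℝ) := by
          exact_mod_cast h1
      _ = (g : ℝ) + ((∑ i : Fin k, (Bf i).card : ℕ) : ℝ) := by rw [hg]; push_cast; ring
      _ ≤ (g : ℝ) + (k : ℝ) * ((u + 1) + (2 * n) * (4 * u + 1)) := by linarith
  -- the two final inequalities
  have hupper : ((Sf.card : ℕ) : ℝ) ≤ 2 * C * u := by
    refine le_trans htotal ?_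
    have hk0 : (0:ℝ) ≤ (k : ℝ) := Nat.cast_nonneg k
    have hn0 : (0:ℝ) ≤ (n : ℝ) := Nat.cast_nonneg n
    have hg0 : (0:ℝ) ≤ (g : ℝ) := Nat.cast_nonneg g
    rw [hCdef]
    have h1u : (0:ℝ) ≤ u - 1 := by linarith
    nlinarith [mul_nonneg hg0 h1u, mul_nonneg hk0 h1u,
      mul_nonneg (mul_nonneg hn0 hk0) h1u]
  have hlower : 4 * C * u ≤ c * X / Real.log X := by
    rw [le_div_iff₀ hlogpos]
    have h1 : 4 * C * u * Real.log X ≤ 4 * C * u * (ε * u) := by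
      exact mul_le_mul_of_nonneg_left hlogu
        (mul_nonneg (mul_nonneg (by norm_num) hC0.le) hu0.le)
    calc 4 * C * u * Real.log X ≤ 4 * C * u * (ε * u) := h1
      _ = (4 * C * ε) * (u * u) := by ring
      _ = c * X := by rw [hε4, hXu]
  have hcontra : c * X / Real.log X ≤ 2 * C * u := le_trans hd (le_trans hS1 hupper)
  nlinarith [mul_pos hC0 hu0, hlower, hcontra]
end
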